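/- arXiv:1705.04960 — 6 statements merged into one kernel-verified Lean document; each statement's English description precedes it below -/
import Mathlib

section
/- Let T : Set → Set be a monad on the category of sets. Suppose there exist elements "x+y" ∈ T({x,y}), "−x" ∈ T({x}), and 0 ∈ T(∅) such that the corresponding operations define an abelian group structure on every T-algebra, and all other operations t_T : B^X → B (for t ∈ T(X)) are homomorphisms of these abelian group structures. Then the category of T-algebras is abelian, with kernels, images, and cokernels computed on underlying abelian groups. -/
open CategoryTheory

universe u

namespace AdditiveMonadStmt

variable (T : CategoryTheory.Monad (Type u))

/-- The `X`-ary operation on a `T`-algebra `B` associated to an element `t ∈ T(X)`: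
`t_T(b) = π_B (T(b)(t))`. -/
def op (B : T.Algebra) {X : Type u} (t : T.obj X) (b : X → B.A) : B.A :=
  B.a (T.map (TypeCat.ofHom b) t)

/-- The binary operation on a `T`-algebra induced by an element `"x+y" ∈ T({x,y})`. -/
def addOf (add : T.obj (ULift.{u} Bool)) (B : T.Algebra) (x y : B.A) : B.A :=
  op T B add (fun i => if i.down then x else y)

/-- The unary operation on a `T`-algebra induced by an element `"−x" ∈ T({x})`. -/
def negOf (neg : T.obj PUnit.{u + 1}) (B : T.Algebra) (x : B.A) : B.A :=
  op T B neg (fun _ => x)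

/-- The constant on a `T`-algebra induced by an element `0 ∈ T(∅)`. -/
def zeroOf (zero : T.obj PEmpty.{u + 1}) (B : T.Algebra) : B.A :=
  op T B zero PEmpty.elim

/-!
Every `T`-algebra is an abelian group under the three given operations, and algebra morphisms
are additive since they commute with all operations. Because every operation is additive, the
pointwise sum of two morphisms is again a morphism, so the category is preadditive. The kernel of
a morphism and its image are closed under all operations; the former is therefore a subalgebra,
and the latter defines a congruence whose quotient algebra is the cokernel. Limits are created by
the forgetful functor. A monomorphism is injective (the forgetful functor is a right adjoint) and
an epimorphism is surjective (its cokernel vanishes); for such morphisms the factorisations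
making them the kernel of their cokernel, resp. the cokernel of their kernel, are computed
elementwise.
-/

open Limits

section

variable {T}

theorem op_map (B : T.Algebra) {X Y : Type u} (g : X → Y) (t : T.obj X) (b : Y → B.A) :
    op T B (T.map (TypeCat.ofHom g) t) b = op T B t (fun x => b (g x)) := by
  simp only [op, ← Functor.map_comp_apply]
  rfl

theorem op_unit (B : T.Algebra) {X : Type u} (x : X) (b : X → B.A) :
    op T B (T.η.app X x) b = b x := by
  have h : T.η.app X ≫ T.map (TypeCat.ofHom b) ≫ B.a = TypeCat.ofHom b := by
    rw [← T.η.naturality_assoc, B.unit]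
    rfl
  exact types_congr_hom h x

theorem op_mu (B : T.Algebra) {X : Type u} (w : T.obj (T.obj X)) (b : X → B.A) :
    op T B (T.μ.app X w) b = op T B w (fun s => op T B s b) := by
  have h : T.μ.app X ≫ T.map (TypeCat.ofHom b) ≫ B.a =
      T.map (T.map (TypeCat.ofHom b) ≫ B.a) ≫ B.a := by
    rw [← T.μ.naturality_assoc, B.assoc, Functor.map_comp_assoc]
    rfl
  exact types_congr_hom h w

theorem op_id (B : T.Algebra) (t : T.obj B.A) : op T B t id = B.a t := by
  simp only [op]
  rw [show TypeCat.ofHom (id : B.A → B.A) = 𝟙 B.A from rfl, T.map_id]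
  rfl

theorem Hom.op_comp {B C : T.Algebra} (g : B ⟶ C) {X : Type u} (t : T.obj X) (b : X → B.A) :
    op T C t (fun x => g.f (b x)) = g.f (op T B t b) := by
  have h : T.map (TypeCat.ofHom b ≫ g.f) ≫ C.a = T.map (TypeCat.ofHom b) ≫ B.a ≫ g.f := by
    rw [Functor.map_comp_assoc, g.h]
  exact types_congr_hom h t

theorem Hom.op_f {B C : T.Algebra} (g : B ⟶ C) (t : T.obj B.A) :
    op T C t g.f = g.f (B.a t) := by
  rw [← op_id B t, ← Hom.op_comp]
  rfl

def homMk {B C : T.Algebra} (f : B.A → C.A) (hf : ∀ t, op T C t f = f (B.a t)) : B ⟶ C where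
  f := TypeCat.ofHom f
  h := by
    ext t
    exact hf t

def IsClosedUnderOps (B : T.Algebra) (S : Set B.A) : Prop :=
  ∀ (X : Type u) (t : T.obj X) (b : X → B.A), (∀ x, b x ∈ S) → op T B t b ∈ S

def subalgebra (B : T.Algebra) (S : Set B.A) (hS : IsClosedUnderOps B S) : T.Algebra where
  A := S
  a := TypeCat.ofHom fun t => ⟨op T B t Subtype.val, hS _ t _ fun x => x.2⟩
  unit := by
    ext x
    exact op_unit B x Subtype.val
  assoc := by
    ext w
    show op T B (T.μ.app S w) Subtype.val = op T B (T.map _ w) Subtype.val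
    rw [op_mu, op_map]

def subalgebraι (B : T.Algebra) (S : Set B.A) (hS : IsClosedUnderOps B S) :
    subalgebra B S hS ⟶ B :=
  homMk Subtype.val fun _ => rfl

def IsCongruence (B : T.Algebra) (s : Setoid B.A) : Prop :=
  ∀ (X : Type u) (t : T.obj X) (b c : X → B.A),
    (∀ x, s (b x) (c x)) → s (op T B t b) (op T B t c)

/-- Evaluating operations on representatives is compatible with the monad multiplication
because `s` is a congruence. -/
noncomputable def quotient (B : T.Algebra) (s : Setoid B.A) (hs : IsCongruence B s) :
    T.Algebra where
  A := Quotient s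
  a := TypeCat.ofHom fun t => ⟦op T B t Quotient.out⟧
  unit := by
    ext q
    show ⟦op T B (T.η.app _ q) Quotient.out⟧ = q
    rw [op_unit, Quotient.out_eq]
  assoc := by
    ext w
    show ⟦op T B (T.μ.app _ w) Quotient.out⟧ = ⟦op T B (T.map _ w) Quotient.out⟧
    rw [op_mu, op_map]
    exact (Quotient.sound (hs _ w _ _ fun v => Quotient.mk_out _)).symm

noncomputable def quotientπ (B : T.Algebra) (s : Setoid B.A) (hs : IsCongruence B s) :
    B ⟶ quotient B s hs :=
  homMk (C := quotient B s hs) (Quotient.mk s) fun t => by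
    show ⟦op T B (T.map (TypeCat.ofHom (Quotient.mk s)) t) Quotient.out⟧ = ⟦B.a t⟧
    rw [op_map, ← op_id B t]
    exact Quotient.sound (hs _ t _ _ fun x => Quotient.mk_out x)

theorem quotientπ_surjective (B : T.Algebra) (s : Setoid B.A) (hs : IsCongruence B s) :
    Function.Surjective (quotientπ B s hs).f :=
  Quotient.mk_surjective

noncomputable def liftOfInjective {B C D : T.Algebra} (f : B ⟶ C) (hf : Function.Injective f.f)
    (k : D ⟶ C) (hk : ∀ d, ∃ b, f.f b = k.f d) : D ⟶ B :=
  homMk (fun d => (hk d).choose) fun t => hf <| by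
    rw [← Hom.op_comp, (hk _).choose_spec, ← Hom.op_f]
    exact congrArg (op T C t) (funext fun d => (hk d).choose_spec)

theorem liftOfInjective_comp {B C D : T.Algebra} (f : B ⟶ C) (hf : Function.Injective f.f)
    (k : D ⟶ C) (hk : ∀ d, ∃ b, f.f b = k.f d) : liftOfInjective f hf k hk ≫ f = k := by
  ext d
  exact (hk d).choose_spec

noncomputable def descOfSurjective {B C D : T.Algebra} (f : B ⟶ C) (hf : Function.Surjective f.f)
    (k : B ⟶ D) (hk : ∀ x y, f.f x = f.f y → k.f x = k.f y) : C ⟶ D :=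
  homMk (fun c => k.f (hf c).choose) fun t => by
    rw [Hom.op_comp]
    refine hk _ _ ?_
    rw [← Hom.op_comp, (hf _).choose_spec, ← op_id C t]
    exact congrArg (op T C t) (funext fun c => (hf c).choose_spec)

theorem comp_descOfSurjective {B C D : T.Algebra} (f : B ⟶ C) (hf : Function.Surjective f.f)
    (k : B ⟶ D) (hk : ∀ x y, f.f x = f.f y → k.f x = k.f y) :
    f ≫ descOfSurjective f hf k hk = k := by
  ext b
  exact hk _ _ (hf (f.f b)).choose_spec

theorem epi_of_surjective {B C : T.Algebra} (f : B ⟶ C) (hf : Function.Surjective f.f) : Epi f :=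
  (Monad.forget T).epi_of_epi_map ((epi_iff_surjective _).2 hf)

theorem injective_of_mono {B C : T.Algebra} (f : B ⟶ C) [Mono f] : Function.Injective f.f :=
  (mono_iff_injective ((Monad.forget T).map f)).1 inferInstance

noncomputable instance : HasLimits T.Algebra :=
  hasLimits_of_hasLimits_createsLimits (Monad.forget T)

end

class AdditiveStructure where
  add : T.obj (ULift.{u} Bool)
  neg : T.obj PUnit.{u + 1}
  zero : T.obj PEmpty.{u + 1}
  addOf_assoc : ∀ (B : T.Algebra) (x y z : B.A),
    addOf T add B (addOf T add B x y) z = addOf T add B x (addOf T add B y z)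
  addOf_comm : ∀ (B : T.Algebra) (x y : B.A), addOf T add B x y = addOf T add B y x
  zeroOf_addOf : ∀ (B : T.Algebra) (x : B.A), addOf T add B (zeroOf T zero B) x = x
  negOf_addOf : ∀ (B : T.Algebra) (x : B.A), addOf T add B (negOf T neg B x) x = zeroOf T zero B
  op_addOf : ∀ (B : T.Algebra) (X : Type u) (t : T.obj X) (b c : X → B.A),
    op T B t (fun x => addOf T add B (b x) (c x)) = addOf T add B (op T B t b) (op T B t c)

namespace AdditiveStructure

variable {T} [AdditiveStructure T]

instance (B : T.Algebra) : Add B.A := ⟨addOf T add B⟩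

instance (B : T.Algebra) : Zero B.A := ⟨zeroOf T zero B⟩

instance (B : T.Algebra) : Neg B.A := ⟨negOf T neg B⟩

instance (B : T.Algebra) : AddCommGroup B.A where
  nsmul := nsmulRec
  zsmul := zsmulRec
  add_assoc := addOf_assoc B
  add_comm := addOf_comm B
  zero_add := zeroOf_addOf B
  add_zero x := (addOf_comm B x _).trans (zeroOf_addOf B x)
  neg_add_cancel := negOf_addOf B

def opAddMonoidHom (B : T.Algebra) {X : Type u} (t : T.obj X) : (X → B.A) →+ B.A :=
  AddMonoidHom.mk' (op T B t) (op_addOf B X t)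

@[simp]
theorem opAddMonoidHom_apply (B : T.Algebra) {X : Type u} (t : T.obj X) (b : X → B.A) :
    opAddMonoidHom B t b = op T B t b :=
  rfl

def toAddMonoidHom {B C : T.Algebra} (g : B ⟶ C) : B.A →+ C.A :=
  AddMonoidHom.mk' g.f fun x y => by
    show g.f (op T B add _) = op T C add _
    rw [← Hom.op_comp]
    congr 1
    funext i
    exact apply_ite _ _ _ _

@[simp]
theorem toAddMonoidHom_apply {B C : T.Algebra} (g : B ⟶ C) (x : B.A) :
    toAddMonoidHom g x = g.f x :=
  rfl

def homAddSubgroup (B C : T.Algebra) : AddSubgroup (B.A → C.A) where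
  carrier := {f | ∀ t, op T C t f = f (B.a t)}
  add_mem' {f g} hf hg t := by
    show opAddMonoidHom C t (f + g) = f (B.a t) + g (B.a t)
    rw [map_add]
    exact congrArg₂ _ (hf t) (hg t)
  zero_mem' t := map_zero (opAddMonoidHom C t)
  neg_mem' {f} hf t := by
    show opAddMonoidHom C t (-f) = -f (B.a t)
    rw [map_neg]
    exact congrArg _ (hf t)

def homEquivHomAddSubgroup (B C : T.Algebra) : (B ⟶ C) ≃ homAddSubgroup B C where
  toFun g := ⟨g.f, Hom.op_f g⟩
  invFun f := homMk f f.2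
  left_inv _ := rfl
  right_inv _ := rfl

noncomputable instance : Preadditive T.Algebra where
  homGroup B C := (homEquivHomAddSubgroup B C).addCommGroup
  add_comp _ _ _ _ _ g := by
    ext x
    exact map_add (toAddMonoidHom g) _ _
  comp_add _ _ _ _ _ _ := rfl

theorem zero_f_apply {B C : T.Algebra} (x : B.A) : (0 : B ⟶ C).f x = 0 :=
  rfl

theorem Hom.apply_eq_apply_of_apply_neg_add_eq_zero {B C : T.Algebra} (g : B ⟶ C) {x y : B.A}
    (h : g.f (-x + y) = 0) : g.f x = g.f y := by
  rw [← toAddMonoidHom_apply, map_add, map_neg, neg_add_eq_zero] at h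
  exact h

theorem isClosedUnderOps_ker {B C : T.Algebra} (f : B ⟶ C) :
    IsClosedUnderOps B (toAddMonoidHom f).ker := by
  intro X t b hb
  change f.f (op T B t b) = 0
  have hb' : (fun x => f.f (b x)) = 0 := funext hb
  rw [← Hom.op_comp, hb']
  exact map_zero (opAddMonoidHom C t)

theorem isClosedUnderOps_range {B C : T.Algebra} (f : B ⟶ C) :
    IsClosedUnderOps C (toAddMonoidHom f).range := by
  intro X t b hb
  choose c hc using hb
  refine ⟨op T B t c, ?_⟩
  rw [toAddMonoidHom_apply, ← Hom.op_comp]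
  exact congrArg (op T C t) (funext hc)

theorem isCongruence_leftRel (B : T.Algebra) (S : AddSubgroup B.A)
    (hS : IsClosedUnderOps B S) : IsCongruence B (QuotientAddGroup.leftRel S) := by
  intro X t b c h
  simp only [QuotientAddGroup.leftRel_apply] at h ⊢
  have e : op T B t (-b + c) = -op T B t b + op T B t c := by
    rw [← opAddMonoidHom_apply, map_add, map_neg]
    rfl
  rw [← e]
  exact hS X t _ h

def ker {B C : T.Algebra} (f : B ⟶ C) : T.Algebra :=
  subalgebra B _ (isClosedUnderOps_ker f)

def kerι {B C : T.Algebra} (f : B ⟶ C) : ker f ⟶ B :=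
  subalgebraι B _ (isClosedUnderOps_ker f)

theorem kerι_comp {B C : T.Algebra} (f : B ⟶ C) : kerι f ≫ f = 0 := by
  ext x
  exact x.2

noncomputable def coker {B C : T.Algebra} (f : B ⟶ C) : T.Algebra :=
  quotient C _ (isCongruence_leftRel C _ (isClosedUnderOps_range f))

noncomputable def cokerπ {B C : T.Algebra} (f : B ⟶ C) : C ⟶ coker f :=
  quotientπ C _ _

theorem cokerπ_surjective {B C : T.Algebra} (f : B ⟶ C) : Function.Surjective (cokerπ f).f :=
  quotientπ_surjective C _ _

theorem cokerπ_apply_eq_zero_iff {B C : T.Algebra} (f : B ⟶ C) (y : C.A) :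
    (cokerπ f).f y = 0 ↔ ∃ b, f.f b = y := by
  rw [← map_zero (toAddMonoidHom (cokerπ f)), toAddMonoidHom_apply]
  change Quotient.mk _ y = Quotient.mk _ 0 ↔ _
  rw [Quotient.eq, QuotientAddGroup.leftRel_apply, add_zero, neg_mem_iff]
  rfl

theorem comp_cokerπ {B C : T.Algebra} (f : B ⟶ C) : f ≫ cokerπ f = 0 := by
  ext b
  exact (cokerπ_apply_eq_zero_iff f _).2 ⟨b, rfl⟩

theorem hom_eq_zero_iff {B C : T.Algebra} (g : B ⟶ C) : g = 0 ↔ ∀ x, g.f x = 0 :=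
  ⟨fun h x => h ▸ zero_f_apply x, fun h => by ext x; exact h x⟩

noncomputable def isColimitCokerπ {B C : T.Algebra} (f : B ⟶ C) :
    IsColimit (CokernelCofork.ofπ (cokerπ f) (comp_cokerπ f)) :=
  CokernelCofork.IsColimit.ofπ' (hp := epi_of_surjective _ (cokerπ_surjective f)) _ _
    fun k hk => ⟨descOfSurjective _ (cokerπ_surjective f) k fun x y hxy => by
      obtain ⟨b, hb⟩ := (cokerπ_apply_eq_zero_iff f (-x + y)).1 (by
        rw [← toAddMonoidHom_apply, map_add, map_neg, neg_add_eq_zero]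
        exact hxy)
      refine Hom.apply_eq_apply_of_apply_neg_add_eq_zero k ?_
      rw [← hb]
      exact (hom_eq_zero_iff (f ≫ k)).1 hk b,
    comp_descOfSurjective _ _ _ _⟩

theorem surjective_of_epi {B C : T.Algebra} (f : B ⟶ C) [Epi f] : Function.Surjective f.f := by
  have hπ : cokerπ f = 0 := (cancel_epi f).1 (by rw [comp_cokerπ, comp_zero])
  exact fun y => (cokerπ_apply_eq_zero_iff f y).1 ((hom_eq_zero_iff _).1 hπ y)

instance : IsNormalMonoCategory T.Algebra where
  normalMonoOfMono f _ := ⟨{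
    Z := coker f
    g := cokerπ f
    w := comp_cokerπ f
    isLimit := KernelFork.IsLimit.ofι' f _ fun k hk =>
      ⟨liftOfInjective f (injective_of_mono f) k fun d =>
        (cokerπ_apply_eq_zero_iff f _).1 ((hom_eq_zero_iff (k ≫ cokerπ f)).1 hk d),
      liftOfInjective_comp _ _ _ _⟩ }⟩

instance : IsNormalEpiCategory T.Algebra where
  normalEpiOfEpi f _ := ⟨{
    W := ker f
    g := kerι f
    w := kerι_comp f
    isColimit := CokernelCofork.IsColimit.ofπ' f _ fun k hk =>
      ⟨descOfSurjective f (surjective_of_epi f) k fun x y hxy => by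
        refine Hom.apply_eq_apply_of_apply_neg_add_eq_zero k ?_
        have hx : -x + y ∈ (toAddMonoidHom f).ker := by
          rw [AddMonoidHom.mem_ker, map_add, map_neg, neg_add_eq_zero]
          exact hxy
        exact (hom_eq_zero_iff (kerι f ≫ k)).1 hk ⟨_, hx⟩,
      comp_descOfSurjective _ _ _ _⟩ }⟩

noncomputable instance abelian : Abelian T.Algebra where
  has_cokernels := ⟨fun f => HasColimit.mk ⟨_, isColimitCokerπ f⟩⟩

end AdditiveStructure

/-- If a monad `T` on the category of sets admits elements `"x+y" ∈ T({x,y})`,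
`"−x" ∈ T({x})` and `0 ∈ T(∅)` whose induced operations make every `T`-algebra an abelian
group, and all operations `t_T : B^X → B` for `t ∈ T(X)` are additive with respect to these
abelian group structures, then the category of `T`-algebras is abelian. -/
theorem abelian_algebras
    (add : T.obj (ULift.{u} Bool)) (neg : T.obj PUnit.{u + 1}) (zero : T.obj PEmpty.{u + 1})
    (hassoc : ∀ (B : T.Algebra) (x y z : B.A),
      addOf T add B (addOf T add B x y) z = addOf T add B x (addOf T add B y z))
    (hcomm : ∀ (B : T.Algebra) (x y : B.A), addOf T add B x y = addOf T add B y x)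
    (hzero : ∀ (B : T.Algebra) (x : B.A), addOf T add B (zeroOf T zero B) x = x)
    (hneg : ∀ (B : T.Algebra) (x : B.A), addOf T add B (negOf T neg B x) x = zeroOf T zero B)
    (hadditive : ∀ (B : T.Algebra) (X : Type u) (t : T.obj X) (b c : X → B.A),
      op T B t (fun x => addOf T add B (b x) (c x)) =
        addOf T add B (op T B t b) (op T B t c)) :
    Nonempty (Abelian T.Algebra) :=
  letI : AdditiveStructure T := ⟨add, neg, zero, hassoc, hcomm, hzero, hneg, hadditive⟩
  ⟨AdditiveStructure.abelian⟩

end AdditiveMonadStmt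
end

section
/- Let A be an abelian category and F a class of morphisms between projective objects of A. Let B ⊆ A be the full subcategory of objects C such that Hom_A(f, C) is an isomorphism for every f ∈ F. Then B is closed under infinite products, kernels, extensions, and cokernels in A; hence B is an abelian category and the inclusion B → A is exact. -/
/-!
Precomposition with `f : U ⟶ V` is the component at `C` of the natural transformation
`Hom(f, -) : Hom(V, -) ⟶ Hom(U, -)` between additive functors `A ⥤ Ab`, and `B` consists of the
objects at which all these components are isomorphisms. Corepresentable functors preserve limits,
so `B` is closed under limits. When `U` and `V` are projective both functors are exact: they
preserve finite colimits, so `B` is closed under finite colimits (in particular cokernels), and they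
preserve short exact sequences, so the five lemma makes `B` closed under extensions. A full
subcategory of an abelian category containing zero and closed under kernels, cokernels and finite
products is abelian, with exact inclusion.
-/

open CategoryTheory CategoryTheory.Limits Opposite

universe w' v u

namespace CategoryTheory

namespace ObjectProperty

variable {C : Type*} [Category C] (P : ObjectProperty C)

instance containsZero_of_isClosedUnderLimitsOfShape [HasZeroObject C]
    [P.IsClosedUnderLimitsOfShape (Discrete.{0} PEmpty)] : P.ContainsZero :=
  let ⟨Z, hZ⟩ := HasZeroObject.zero (C := C)
  ⟨⟨Z, hZ, P.prop_of_isTerminal _ hZ.isTerminal⟩⟩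

variable [HasZeroMorphisms C]

instance isClosedUnderKernels_of_isClosedUnderLimitsOfShape
    [P.IsClosedUnderLimitsOfShape WalkingParallelPair] : P.IsClosedUnderKernels :=
  ⟨fun _ ⟨_, _, hk, hX, hY⟩ ↦ P.prop_of_isLimit hk (by rintro (_ | _) <;> assumption)⟩

instance isClosedUnderCokernels_of_isClosedUnderColimitsOfShape
    [P.IsClosedUnderColimitsOfShape WalkingParallelPair] : P.IsClosedUnderCokernels :=
  ⟨fun _ ⟨_, _, hk, hX, hY⟩ ↦ P.prop_of_isColimit hk (by rintro (_ | _) <;> assumption)⟩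

end ObjectProperty

namespace NatTrans

variable {C D : Type*} [Category C] [Category D] {G H : C ⥤ D} (τ : G ⟶ H)

lemma isIso_app_of_isColimit {J : Type*} [Category J] {K : J ⥤ C} {c : Cocone K}
    (hc : IsColimit c) [PreservesColimit K G] [PreservesColimit K H]
    (h : ∀ j, IsIso (τ.app (K.obj j))) : IsIso (τ.app c.pt) := by
  have hG := isColimitOfPreserves G hc
  have hH := isColimitOfPreserves H hc
  have : ∀ j, IsIso ((Functor.whiskerLeft K τ).app j) := h
  have : IsIso (Functor.whiskerLeft K τ) := NatIso.isIso_of_isIso_app _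
  have e : (hG.coconePointsIsoOfNatIso hH (asIso (Functor.whiskerLeft K τ))).hom = τ.app c.pt :=
    hG.hom_ext fun j ↦ (hG.ι_map (H.mapCocone c) _ j).trans (τ.naturality (c.ι.app j)).symm
  rw [← e]
  infer_instance

lemma isIso_app_X₂_of_shortExact [Abelian C] [Abelian D]
    [PreservesFiniteLimits G] [PreservesFiniteColimits G]
    [PreservesFiniteLimits H] [PreservesFiniteColimits H]
    {S : ShortComplex C} (hS : S.ShortExact) (h₁ : IsIso (τ.app S.X₁))
    (h₃ : IsIso (τ.app S.X₃)) : IsIso (τ.app S.X₂) :=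
  ShortComplex.isIso₂_of_shortExact_of_isIso₁₃' (S.mapNatTrans τ)
    (hS.map_of_exact G) (hS.map_of_exact H) h₁ h₃

end NatTrans

instance preservesFiniteColimits_preadditiveCoyoneda_obj_of_projective {A : Type u}
    [Category.{v} A] [Abelian A] (P : A) [Projective P] :
    PreservesFiniteColimits (preadditiveCoyoneda.obj (op P)) :=
  comp_preservesFiniteColimits (preadditiveCoyonedaObj P) (forget₂ _ _)

namespace MorphismProperty

variable {A : Type*} [Category A]

lemma isLocal_iff_isIso_preadditiveCoyoneda_map [Preadditive A] (W : MorphismProperty A)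
    (Z : A) : W.isLocal Z ↔
      ∀ ⦃U V : A⦄ (f : U ⟶ V), W f → IsIso ((preadditiveCoyoneda.map f.op).app Z) := by
  simp only [ConcreteCategory.isIso_iff_bijective]
  rfl

variable [Abelian A] {W : MorphismProperty A}

lemma isClosedUnderColimitsOfShape_isLocal_of_projective
    (hW : ∀ ⦃U V : A⦄ (f : U ⟶ V), W f → Projective U ∧ Projective V)
    (J : Type) [SmallCategory J] [FinCategory J] :
    W.isLocal.IsClosedUnderColimitsOfShape J where
  colimitsOfShape_le Z := fun ⟨p⟩ ↦ (isLocal_iff_isIso_preadditiveCoyoneda_map W Z).2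
    fun _ _ f hf ↦ by
      obtain ⟨_, _⟩ := hW f hf
      exact NatTrans.isIso_app_of_isColimit _ p.isColimit fun j ↦
        (isLocal_iff_isIso_preadditiveCoyoneda_map W _).1 (p.prop_diag_obj j) f hf

lemma isClosedUnderExtensions_isLocal_of_projective
    (hW : ∀ ⦃U V : A⦄ (f : U ⟶ V), W f → Projective U ∧ Projective V) :
    W.isLocal.IsClosedUnderExtensions where
  prop_X₂_of_shortExact {S} hS h₁ h₃ := (isLocal_iff_isIso_preadditiveCoyoneda_map W _).2
    fun _ _ f hf ↦ by
      obtain ⟨_, _⟩ := hW f hf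
      exact NatTrans.isIso_app_X₂_of_shortExact _ hS
        ((isLocal_iff_isIso_preadditiveCoyoneda_map W _).1 h₁ f hf)
        ((isLocal_iff_isIso_preadditiveCoyoneda_map W _).1 h₃ f hf)

end MorphismProperty

end CategoryTheory

/-- Let `A` be an abelian category and `F` a class of morphisms between projective objects
of `A`.  The full subcategory `B = F^{⊥₀}` of objects `C` such that `Hom_A(f, C)` is an
isomorphism for every `f ∈ F` is closed under infinite products, kernels, extensions and
cokernels in `A`; hence `B` is an abelian category and the inclusion `B → A` is exact. -/
theorem right_zero_perpendicular_to_morphisms_of_projectives_closure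
    {A : Type u} [Category.{v} A] [Abelian A]
    (F : MorphismProperty A)
    (hproj : ∀ ⦃U V : A⦄ (f : U ⟶ V), F f → Projective U ∧ Projective V)
    (B : Set A)
    (hB : ∀ C : A, C ∈ B ↔ ∀ ⦃U V : A⦄ (f : U ⟶ V), F f →
      Function.Bijective (fun g : V ⟶ C => f ≫ g)) :
    -- closed under infinite products (whenever they exist in `A`)
    (∀ (ι : Type w') (f : ι → A), (∀ i, f i ∈ B) →
      ∀ (c : Fan f), IsLimit c → c.pt ∈ B) ∧
    -- closed under kernels
    (∀ (X Y : A), X ∈ B → Y ∈ B → ∀ g : X ⟶ Y, kernel g ∈ B) ∧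
    -- closed under extensions
    (∀ S : ShortComplex A, S.ShortExact → S.X₁ ∈ B → S.X₃ ∈ B → S.X₂ ∈ B) ∧
    -- closed under cokernels
    (∀ (X Y : A), X ∈ B → Y ∈ B → ∀ g : X ⟶ Y, cokernel g ∈ B) ∧
    -- hence `B` is an abelian category whose inclusion into `A` is exact
    (∃ _ : Abelian (ObjectProperty.FullSubcategory (· ∈ B)),
      Nonempty (PreservesFiniteLimits (ObjectProperty.ι (· ∈ B))) ∧
      Nonempty (PreservesFiniteColimits (ObjectProperty.ι (· ∈ B)))) := by
  obtain rfl : B = {C | F.isLocal C} := Set.ext hB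
  have := fun J [SmallCategory J] [FinCategory J] ↦
    MorphismProperty.isClosedUnderColimitsOfShape_isLocal_of_projective hproj J
  have := MorphismProperty.isClosedUnderExtensions_isLocal_of_projective hproj
  have : F.isLocal.IsClosedUnderFiniteProducts := {}
  refine ⟨fun ι f hf c hc ↦ F.isLocal.prop_of_isLimit hc fun j ↦ hf j.as,
    fun X Y hX hY g ↦ F.isLocal.prop_kernel g hX hY,
    fun S hS ↦ F.isLocal.prop_X₂_of_shortExact hS,
    fun X Y hX hY g ↦ F.isLocal.prop_cokernel g hX hY, ?_⟩
  change ∃ _ : Abelian F.isLocal.FullSubcategory, Nonempty (PreservesFiniteLimits F.isLocal.ι) ∧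
    Nonempty (PreservesFiniteColimits F.isLocal.ι)
  exact ⟨inferInstance, ⟨⟨fun _ ↦ inferInstance⟩⟩, ⟨⟨fun _ ↦ inferInstance⟩⟩⟩
end

section
/- Let R be an associative ring and κ a regular cardinal. For a left R-module F the following are equivalent: (a) every morphism from a κ-presentable left R-module into F factorizes through a projective left R-module; (b) every morphism from a κ-presentable left R-module into F factorizes through a free left R-module with fewer than κ generators; (c) F is the colimit of a κ-filtered diagram of projective left R-modules. -/
open CategoryTheory CategoryTheory.Limits

universe u

/-- A category `J` is `κ`-filtered if every subdiagram of size `< κ` admits a cocone. -/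
def IsCardFiltered (J : Type u) [Category.{u} J] (κ : Cardinal.{u}) : Prop :=
  ∀ (K : Type u) (_ : SmallCategory K), Cardinal.mk K < κ →
    Cardinal.mk (Σ (a : K) (b : K), a ⟶ b) < κ →
    ∀ F : K ⥤ J, Nonempty (Cocone F)

variable {R : Type u} [Ring R]

/-- A left `R`-module is `κ`-presentable if it is the cokernel of a morphism of free
modules each with fewer than `κ` generators. -/
def IsKappaPresentable (κ : Cardinal.{u}) (E : ModuleCat.{u} R) : Prop :=
  ∃ (X Y : Type u) (_ : Cardinal.mk X < κ) (_ : Cardinal.mk Y < κ)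
    (g : (X →₀ R) →ₗ[R] (Y →₀ R)),
    Nonempty ((((Y →₀ R)) ⧸ (LinearMap.range g)) ≃ₗ[R] E)

/-- Condition (a): every morphism from a `κ`-presentable module into `F` factorizes
through a projective module. -/
def FactorsThroughProjective (κ : Cardinal.{u}) (F : ModuleCat.{u} R) : Prop :=
  ∀ (E : ModuleCat.{u} R), IsKappaPresentable κ E → ∀ φ : E ⟶ F,
    ∃ (P : ModuleCat.{u} R) (_ : Projective P) (α : E ⟶ P) (β : P ⟶ F), α ≫ β = φ

/-- Condition (b): every morphism from a `κ`-presentable module into `F` factorizes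
through a free module with fewer than `κ` generators. -/
def FactorsThroughSmallFree (κ : Cardinal.{u}) (F : ModuleCat.{u} R) : Prop :=
  ∀ (E : ModuleCat.{u} R), IsKappaPresentable κ E → ∀ φ : E ⟶ F,
    ∃ (Z : Type u) (_ : Cardinal.mk Z < κ)
      (α : E ⟶ ModuleCat.of R (Z →₀ R)) (β : ModuleCat.of R (Z →₀ R) ⟶ F), α ≫ β = φ

/-- Condition (c): `F` is the colimit of a `κ`-filtered diagram of projective modules. -/
def IsKappaFilteredColimitOfProjectives (κ : Cardinal.{u}) (F : ModuleCat.{u} R) : Prop :=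
  ∃ (J : Type u) (_ : SmallCategory J) (_ : IsCardFiltered J κ)
    (D : J ⥤ ModuleCat.{u} R) (_ : ∀ j, Projective (D.obj j))
    (c : Cocone D) (_ : IsColimit c), Nonempty (c.pt ≅ F)

/-!
(a) ⇒ (b): a `κ`-presentable module has fewer than `κ` generators, and a projective module is a
direct summand of a free module, in which the images of these generators have supports of total
size `< κ`.

(b) ⇒ (c): the free modules on fewer than `κ` generators over `F` form a `κ`-filtered category
(the colimit of a small diagram of them is `κ`-presentable, so its map to `F` factors through one
of them), and `F` is their colimit by the same factorization argument.

(c) ⇒ (a): a map from a `κ`-presentable module into a `κ`-filtered colimit factors through a stage: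
lift the fewer than `κ` generators to one stage, then kill the fewer than `κ` relations at a later
one.
-/

open LinearMap (range)

lemma IsCardFiltered.isCardinalFiltered {J : Type u} [SmallCategory J] {κ : Cardinal.{u}}
    [Fact κ.IsRegular] (hJ : IsCardFiltered J κ) : IsCardinalFiltered J κ where
  nonempty_cocone {A _} F hA := by
    rw [hasCardinalLT_iff_of_equiv (Arrow.equivSigma A)] at hA
    refine hJ A _ ?_ ((hasCardinalLT_iff_cardinal_mk_lt _ _).1 hA) F
    rw [← hasCardinalLT_iff_cardinal_mk_lt]
    exact hA.of_surjective Sigma.fst fun a => ⟨⟨a, a, 𝟙 a⟩, rfl⟩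

namespace CategoryTheory.Limits.IsColimit

section

variable {C : Type*} [Category C] {FC : C → C → Type*} {CC : C → Type*}
  [∀ X Y, FunLike (FC X Y) (CC X) (CC Y)] [ConcreteCategory C FC]
  {J : Type u} [SmallCategory J] {κ : Cardinal.{u}} [Fact κ.IsRegular] [IsCardinalFiltered J κ]
  [PreservesColimitsOfShape J (forget C)] {D : J ⥤ C} {c : Cocone D}

lemma exists_rep_family (hc : IsColimit c) {Y : Type*} (hY : HasCardinalLT Y κ)
    (v : Y → ToType c.pt) :
    ∃ (j : J) (p : Y → ToType (D.obj j)), ∀ y, c.ι.app j (p y) = v y := by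
  choose j p hp using fun y => Concrete.isColimit_exists_rep D hc (v y)
  refine ⟨IsCardinalFiltered.max j hY,
    fun y => D.map (IsCardinalFiltered.toMax j hY y) (p y), fun y => ?_⟩
  rw [← hp y, ← ConcreteCategory.comp_apply, c.w]

lemma exists_map_eq_of_rep_eq (hc : IsColimit c) {X : Type*} (hX : HasCardinalLT X κ) {j : J}
    (p q : X → ToType (D.obj j)) (h : ∀ x, c.ι.app j (p x) = c.ι.app j (q x)) :
    ∃ (k : J) (f : j ⟶ k), ∀ x, D.map f (p x) = D.map f (q x) := by
  have := isFiltered_of_isCardinalFiltered J κ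
  choose k f hf using fun x => (hc.eq_iff' (p x) (q x)).1 (h x)
  obtain ⟨m, a, b, hab⟩ := IsCardinalFiltered.wideSpan f hX
  refine ⟨m, b, fun x => ?_⟩
  simp only [← hab x, Functor.map_comp, ConcreteCategory.comp_apply, hf x]

end

section

variable {J : Type u} [SmallCategory J] {κ : Cardinal.{u}} [Fact κ.IsRegular]
  [IsCardinalFiltered J κ] [PreservesColimitsOfShape J (forget (ModuleCat.{u} R))]
  {D : J ⥤ ModuleCat.{u} R} {c : Cocone D}

lemma exists_factor_of_quotient (hc : IsColimit c) {X Y : Type u} (hX : HasCardinalLT X κ)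
    (hY : HasCardinalLT Y κ) (g : (X →₀ R) →ₗ[R] (Y →₀ R))
    (ψ : ((Y →₀ R) ⧸ range g) →ₗ[R] c.pt) :
    ∃ (j : J) (χ : ((Y →₀ R) ⧸ range g) →ₗ[R] D.obj j),
      (c.ι.app j).hom ∘ₗ χ = ψ := by
  set π := (range g).mkQ
  obtain ⟨j₀, p, hp⟩ := hc.exists_rep_family hY fun y => ψ (π (Finsupp.single y 1))
  set ψ₀ := Finsupp.linearCombination R p
  have hψ₀ : (c.ι.app j₀).hom ∘ₗ ψ₀ = ψ ∘ₗ π :=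
    Finsupp.basisSingleOne.ext fun y => by simpa [ψ₀] using hp y
  have hrel (x : X) : c.ι.app j₀ (ψ₀ (g (Finsupp.single x 1))) = c.ι.app j₀ 0 := by
    rw [map_zero]
    exact (LinearMap.congr_fun hψ₀ _).trans (by simp [π, (Submodule.Quotient.mk_eq_zero _).2])
  obtain ⟨j₁, f, hf⟩ := hc.exists_map_eq_of_rep_eq hX _ _ hrel
  set ψ₁ := (D.map f).hom ∘ₗ ψ₀
  have hg : range g ≤ LinearMap.ker ψ₁ :=
    LinearMap.range_le_ker_iff.2 (Finsupp.basisSingleOne.ext fun x => by simpa [ψ₁] using hf x)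
  refine ⟨j₁, (range g).liftQ ψ₁ hg, (range g).linearMap_qext ?_⟩
  calc (c.ι.app j₁).hom ∘ₗ (range g).liftQ ψ₁ hg ∘ₗ π
      = (D.map f ≫ c.ι.app j₁).hom ∘ₗ ψ₀ := by ext; simp [ψ₁, π]
    _ = ψ ∘ₗ π := by rw [c.w, hψ₀]

end

end CategoryTheory.Limits.IsColimit

lemma IsKappaPresentable.exists_factor_through_stage {κ : Cardinal.{u}} [Fact κ.IsRegular]
    {J : Type u} [SmallCategory J] [IsCardinalFiltered J κ]
    [PreservesColimitsOfShape J (forget (ModuleCat.{u} R))] {D : J ⥤ ModuleCat.{u} R}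
    {c : Cocone D} (hc : IsColimit c) {E : ModuleCat.{u} R} (hE : IsKappaPresentable κ E)
    (φ : E ⟶ c.pt) : ∃ (j : J) (χ : E ⟶ D.obj j), χ ≫ c.ι.app j = φ := by
  obtain ⟨X, Y, hX, hY, g, ⟨e⟩⟩ := hE
  obtain ⟨j, χ, hχ⟩ := hc.exists_factor_of_quotient ((hasCardinalLT_iff_cardinal_mk_lt _ _).2 hX)
    ((hasCardinalLT_iff_cardinal_mk_lt _ _).2 hY) g (φ.hom ∘ₗ e.toLinearMap)
  refine ⟨j, ModuleCat.ofHom (χ ∘ₗ e.symm.toLinearMap), ?_⟩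
  ext v
  simpa using LinearMap.congr_fun hχ (e.symm v)

lemma IsKappaPresentable.exists_span_eq_top {κ : Cardinal.{u}} {E : ModuleCat.{u} R}
    (hE : IsKappaPresentable κ E) :
    ∃ (Y : Type u) (_ : HasCardinalLT Y κ) (v : Y → E), Submodule.span R (Set.range v) = ⊤ := by
  obtain ⟨X, Y, -, hY, g, ⟨e⟩⟩ := hE
  refine ⟨Y, (hasCardinalLT_iff_cardinal_mk_lt _ _).2 hY,
    fun y => e ((range g).mkQ (Finsupp.single y 1)), ?_⟩
  have : Finsupp.linearCombination R (fun y => e ((range g).mkQ (Finsupp.single y 1)))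
      = e.toLinearMap ∘ₗ (range g).mkQ :=
    Finsupp.basisSingleOne.ext fun y => by simp
  rw [← Finsupp.range_linearCombination, LinearMap.range_eq_top, this, LinearMap.coe_comp]
  exact e.surjective.comp (range g).mkQ_surjective

lemma Module.Projective.exists_factor_finsupp_of_span_eq_top {κ : Cardinal} [Fact κ.IsRegular]
    {M P : Type*} [AddCommGroup M] [Module R M] [AddCommGroup P] [Module R P]
    [Module.Projective R P] {Y : Type*} (hY : HasCardinalLT Y κ) (v : Y → M)
    (hv : Submodule.span R (Set.range v) = ⊤) (α : M →ₗ[R] P) :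
    ∃ (T : Set P) (_ : HasCardinalLT T κ) (σ : M →ₗ[R] (T →₀ R)),
      Finsupp.linearCombination R (↑) ∘ₗ σ = α := by
  obtain ⟨s, hs⟩ := Module.projective_def'.1 ‹Module.Projective R P›
  set T := ⋃ y, ((s (α (v y))).support : Set P)
  have hT : HasCardinalLT T κ := hasCardinalLT_iUnion _ hY fun _ =>
    hasCardinalLT_of_finite _ _ (Fact.out : κ.IsRegular).aleph0_le
  have hσ (m : M) : s (α m) ∈ Finsupp.supported R R T := by
    have hm : m ∈ Submodule.span R (Set.range v) := hv ▸ Submodule.mem_top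
    refine (Submodule.span_le (p := (Finsupp.supported R R T).comap (s ∘ₗ α))).2 ?_ hm
    rintro _ ⟨y, rfl⟩
    exact (Finsupp.mem_supported R _).2 <|
      Set.subset_iUnion (fun y => ((s (α (v y))).support : Set P)) y
  refine ⟨T, hT, (Finsupp.supportedEquivFinsupp T).toLinearMap ∘ₗ (s ∘ₗ α).codRestrict _ hσ, ?_⟩
  ext m
  rw [← LinearMap.id_apply (R := R) (α m), ← hs,
    show ((↑) : T → P) = T.domRestrict id from rfl, Finsupp.linearCombination_restrict]
  simp [Finsupp.linearCombinationOn]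

noncomputable section

variable {κ : Cardinal.{u}} {F : ModuleCat.{u} R}

lemma FactorsThroughSmallFree.factorsThroughProjective (h : FactorsThroughSmallFree κ F) :
    FactorsThroughProjective κ F := fun E hE φ =>
  let ⟨_, _, α, β, hαβ⟩ := h E hE φ
  ⟨_, inferInstance, α, β, hαβ⟩

lemma FactorsThroughProjective.factorsThroughSmallFree [Fact κ.IsRegular]
    (h : FactorsThroughProjective κ F) : FactorsThroughSmallFree κ F := by
  intro E hE φ
  obtain ⟨P, hP, α, β, rfl⟩ := h E hE φ
  have : Module.Projective R P := (IsProjective.iff_projective P).2 hP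
  obtain ⟨Y, hY, v, hv⟩ := hE.exists_span_eq_top
  obtain ⟨T, hT, σ, hσ⟩ := Module.Projective.exists_factor_finsupp_of_span_eq_top hY v hv α.hom
  refine ⟨T, (hasCardinalLT_iff_cardinal_mk_lt _ _).1 hT, ModuleCat.ofHom σ,
    ModuleCat.ofHom (Finsupp.linearCombination R (↑)) ≫ β, ?_⟩
  ext m
  simp [← hσ]

lemma IsKappaFilteredColimitOfProjectives.factorsThroughProjective [Fact κ.IsRegular]
    (h : IsKappaFilteredColimitOfProjectives κ F) : FactorsThroughProjective κ F := by
  obtain ⟨J, _, hJ, D, hD, c, hc, ⟨e⟩⟩ := h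
  have := hJ.isCardinalFiltered
  have := isFiltered_of_isCardinalFiltered J κ
  intro E hE φ
  obtain ⟨j, χ, hχ⟩ := hE.exists_factor_through_stage hc (φ ≫ e.inv)
  exact ⟨D.obj j, hD j, χ, c.ι.app j ≫ e.hom, by simp [reassoc_of% hχ]⟩

/-- Generators are drawn from subsets of `κ.out` so that these objects form a small category. -/
structure SmallFreeOver (κ : Cardinal.{u}) (F : ModuleCat.{u} R) : Type u where
  Z : Set κ.out
  hZ : Cardinal.mk Z < κ
  β : (Z →₀ R) →ₗ[R] F

namespace SmallFreeOver

instance : SmallCategory (SmallFreeOver κ F) where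
  Hom A B := {t : (A.Z →₀ R) →ₗ[R] (B.Z →₀ R) // B.β ∘ₗ t = A.β}
  id A := ⟨LinearMap.id, LinearMap.comp_id _⟩
  comp f g := ⟨g.1 ∘ₗ f.1, by rw [← LinearMap.comp_assoc, g.2, f.2]⟩

variable (κ F) in
def diagram : SmallFreeOver κ F ⥤ ModuleCat.{u} R where
  obj A := ModuleCat.of R (A.Z →₀ R)
  map f := ModuleCat.ofHom f.1

variable (κ F) in
def cocone : Cocone (diagram κ F) where
  pt := F
  ι.app A := ModuleCat.ofHom A.β
  ι.naturality _ _ f := by ext : 1; exact f.2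

lemma exists_linearEquiv {Z : Type u} (hZ : Cardinal.mk Z < κ) (β : (Z →₀ R) →ₗ[R] F) :
    ∃ (A : SmallFreeOver κ F) (e : (Z →₀ R) ≃ₗ[R] (A.Z →₀ R)), A.β ∘ₗ e.toLinearMap = β := by
  obtain ⟨i⟩ : Nonempty (Z ↪ κ.out) := by
    rw [← Cardinal.le_def, Cardinal.mk_out]
    exact hZ.le
  let e := Finsupp.domLCongr (R := R) (M := R) (Equiv.ofInjective i i.injective)
  refine ⟨⟨Set.range i, by rwa [Cardinal.mk_range_eq i i.injective], β ∘ₗ e.symm.toLinearMap⟩,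
    e, ?_⟩
  ext
  simp

lemma exists_factor_of_quotient (hb : FactorsThroughSmallFree κ F) {X Y : Type u}
    (hX : Cardinal.mk X < κ) (hY : Cardinal.mk Y < κ) (g : (X →₀ R) →ₗ[R] (Y →₀ R))
    (φ : ((Y →₀ R) ⧸ range g) →ₗ[R] F) :
    ∃ (A : SmallFreeOver κ F) (α : ((Y →₀ R) ⧸ range g) →ₗ[R] (A.Z →₀ R)),
      A.β ∘ₗ α = φ := by
  obtain ⟨Z, hZ, α, β, hαβ⟩ :=
    hb (ModuleCat.of R _) ⟨X, Y, hX, hY, g, ⟨LinearEquiv.refl _ _⟩⟩ (ModuleCat.ofHom φ)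
  obtain ⟨A, e, hA⟩ := exists_linearEquiv hZ β.hom
  refine ⟨A, e.toLinearMap ∘ₗ α.hom, ?_⟩
  rw [← LinearMap.comp_assoc, hA, ← ModuleCat.hom_comp, hαβ, ModuleCat.hom_ofHom]

section ColimitPresentation

variable {K : Type u} [SmallCategory K] (G : K ⥤ SmallFreeOver κ F)

/- `(colimGens G →₀ R) ⧸ range (colimRel G)` is the colimit of the free modules of `G`: each
relation identifies a generator `z` of the source of an arrow `f` with its image under `G.map f`. -/
abbrev colimGens : Type u := Σ k, (G.obj k).Z

abbrev colimRels : Type u := Σ f : (Σ (a b : K), a ⟶ b), (G.obj f.1).Z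

def colimIncl (k : K) : ((G.obj k).Z →₀ R) →ₗ[R] (colimGens G →₀ R) :=
  Finsupp.lmapDomain R R fun z => (⟨k, z⟩ : colimGens G)

def colimRel : (colimRels G →₀ R) →ₗ[R] (colimGens G →₀ R) :=
  Finsupp.linearCombination R fun r =>
    colimIncl G r.1.2.1 ((G.map r.1.2.2).1 (Finsupp.single r.2 1)) -
      colimIncl G r.1.1 (Finsupp.single r.2 1)

def colimDesc : (colimGens G →₀ R) →ₗ[R] F :=
  Finsupp.linearCombination R fun y => (G.obj y.1).β (Finsupp.single y.2 1)

lemma colimDesc_comp_colimIncl (k : K) : colimDesc G ∘ₗ colimIncl G k = (G.obj k).β :=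
  Finsupp.basisSingleOne.ext fun z => by simp [colimDesc, colimIncl]

lemma range_colimRel_le_ker_colimDesc : range (colimRel G) ≤ LinearMap.ker (colimDesc G) := by
  refine LinearMap.range_le_ker_iff.2 (Finsupp.basisSingleOne.ext fun ⟨⟨a, b, f⟩, z⟩ => ?_)
  have hb := LinearMap.congr_fun (colimDesc_comp_colimIncl G b) ((G.map f).1 (Finsupp.single z 1))
  have ha := LinearMap.congr_fun (colimDesc_comp_colimIncl G a) (Finsupp.single z 1)
  have hf := LinearMap.congr_fun (G.map f).2 (Finsupp.single z 1)
  simp_all [colimRel]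

lemma mkQ_comp_colimIncl_comp_map {a b : K} (f : a ⟶ b) :
    (range (colimRel G)).mkQ ∘ₗ colimIncl G b ∘ₗ (G.map f).1 =
      (range (colimRel G)).mkQ ∘ₗ colimIncl G a :=
  Finsupp.basisSingleOne.ext fun z => by
    simp only [LinearMap.comp_apply, Finsupp.coe_basisSingleOne, Submodule.mkQ_apply,
      Submodule.Quotient.eq]
    exact ⟨Finsupp.single ⟨⟨a, b, f⟩, z⟩ 1, by simp [colimRel]⟩

end ColimitPresentation

lemma isCardFiltered [Fact κ.IsRegular] (hb : FactorsThroughSmallFree κ F) :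
    IsCardFiltered (SmallFreeOver κ F) κ := by
  intro K _ hK hK' G
  have hκ : κ.IsRegular := Fact.out
  obtain ⟨A, α, hα⟩ := exists_factor_of_quotient hb
    (by rw [Cardinal.mk_sigma]; exact Cardinal.sum_lt_of_isRegular hκ hK' fun f => (G.obj f.1).hZ)
    (by rw [Cardinal.mk_sigma]; exact Cardinal.sum_lt_of_isRegular hκ hK fun k => (G.obj k).hZ)
    (colimRel G) ((range (colimRel G)).liftQ _ (range_colimRel_le_ker_colimDesc G))
  refine ⟨⟨A,
    { app k := ⟨α ∘ₗ (range (colimRel G)).mkQ ∘ₗ colimIncl G k, ?_⟩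
      naturality a b f := ?_ }⟩⟩
  · change A.β ∘ₗ α ∘ₗ (range (colimRel G)).mkQ ∘ₗ colimIncl G k = (G.obj k).β
    rw [← LinearMap.comp_assoc, hα, ← LinearMap.comp_assoc, Submodule.liftQ_mkQ,
      colimDesc_comp_colimIncl]
  · apply Subtype.ext
    change (α ∘ₗ (range (colimRel G)).mkQ ∘ₗ colimIncl G b) ∘ₗ (G.map f).1 =
      LinearMap.id ∘ₗ α ∘ₗ (range (colimRel G)).mkQ ∘ₗ colimIncl G a
    rw [LinearMap.id_comp, LinearMap.comp_assoc, LinearMap.comp_assoc,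
      mkQ_comp_colimIncl_comp_map]

lemma exists_β_apply_eq [Fact κ.IsRegular] (x : F) :
    ∃ (A : SmallFreeOver κ F) (v : A.Z →₀ R), A.β v = x := by
  obtain ⟨A, e, hA⟩ := exists_linearEquiv (by simpa using (Fact.out : κ.IsRegular).nat_lt 1)
    (Finsupp.linearCombination R fun _ : PUnit.{u + 1} => x)
  exact ⟨A, e (Finsupp.single PUnit.unit 1), by
    simpa using LinearMap.congr_fun hA (Finsupp.single PUnit.unit 1)⟩

lemma exists_hom_apply_eq_zero [Fact κ.IsRegular] (hb : FactorsThroughSmallFree κ F)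
    {A : SmallFreeOver κ F} {ξ : A.Z →₀ R} (hξ : A.β ξ = 0) :
    ∃ (B : SmallFreeOver κ F) (t : A ⟶ B), t.1 ξ = 0 := by
  set g := Finsupp.linearCombination R fun _ : PUnit.{u + 1} => ξ
  have hξg : ξ ∈ range g := ⟨Finsupp.single PUnit.unit 1, by simp [g]⟩
  have hg : range g ≤ LinearMap.ker A.β :=
    LinearMap.range_le_ker_iff.2 (Finsupp.lhom_ext fun _ _ => by simp [g, hξ])
  obtain ⟨B, α, hα⟩ := exists_factor_of_quotient hb
    (by simpa using (Fact.out : κ.IsRegular).nat_lt 1) A.hZ g ((range g).liftQ A.β hg)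
  refine ⟨B, ⟨α ∘ₗ (range g).mkQ, by rw [← LinearMap.comp_assoc, hα, Submodule.liftQ_mkQ]⟩, ?_⟩
  simp [(Submodule.Quotient.mk_eq_zero _).2 hξg]

def isColimitCocone [Fact κ.IsRegular] (hb : FactorsThroughSmallFree κ F) :
    IsColimit (cocone κ F) := by
  have := (isCardFiltered hb).isCardinalFiltered
  have := isFiltered_of_isCardinalFiltered (SmallFreeOver κ F) κ
  refine isColimitOfReflects (forget _) (Types.FilteredColimit.isColimitOf _ _
    (fun x => ?_) fun A B ξ η h => ?_)
  · obtain ⟨A, v, rfl⟩ := exists_β_apply_eq (κ := κ) x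
    exact ⟨A, v, rfl⟩
  · set s := IsFiltered.leftToMax A B
    set t := IsFiltered.rightToMax A B
    have hst : (IsFiltered.max A B).β (s.1 ξ - t.1 η) = 0 := by
      have hs : (IsFiltered.max A B).β (s.1 ξ) = A.β ξ := LinearMap.congr_fun s.2 ξ
      have ht : (IsFiltered.max A B).β (t.1 η) = B.β η := LinearMap.congr_fun t.2 η
      rw [map_sub, hs, ht, sub_eq_zero]
      exact h
    obtain ⟨C, u, hu⟩ := exists_hom_apply_eq_zero hb hst
    refine ⟨C, s ≫ u, t ≫ u, ?_⟩
    rw [map_sub, sub_eq_zero] at hu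
    exact hu

end SmallFreeOver

lemma FactorsThroughSmallFree.isKappaFilteredColimitOfProjectives [Fact κ.IsRegular]
    (hb : FactorsThroughSmallFree κ F) : IsKappaFilteredColimitOfProjectives κ F :=
  ⟨SmallFreeOver κ F, inferInstance, SmallFreeOver.isCardFiltered hb, SmallFreeOver.diagram κ F,
    fun A => (inferInstance : Projective (ModuleCat.of R (A.Z →₀ R))), SmallFreeOver.cocone κ F,
    SmallFreeOver.isColimitCocone hb, ⟨Iso.refl F⟩⟩

end

/-- For an associative ring `R`, a regular cardinal `κ` and a left `R`-module `F`,
conditions (a), (b), (c) above are equivalent (`κ`-flatness). -/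
theorem kappaFlat_tfae (κ : Cardinal.{u}) (hκ : κ.IsRegular) (F : ModuleCat.{u} R) :
    (FactorsThroughProjective κ F ↔ FactorsThroughSmallFree κ F) ∧
    (FactorsThroughProjective κ F ↔ IsKappaFilteredColimitOfProjectives κ F) := by
  have : Fact κ.IsRegular := ⟨hκ⟩
  have a_to_b : FactorsThroughProjective κ F → FactorsThroughSmallFree κ F :=
    FactorsThroughProjective.factorsThroughSmallFree
  exact ⟨⟨a_to_b, FactorsThroughSmallFree.factorsThroughProjective⟩,
    fun ha => (a_to_b ha).isKappaFilteredColimitOfProjectives,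
    IsKappaFilteredColimitOfProjectives.factorsThroughProjective⟩
end

section
/- Let R be an associative ring, κ a regular cardinal with the property that every left ideal of R is generated by fewer than κ elements, and assume R is left hereditary. Then a left R-module F is κ-flat if and only if every subset of F of cardinality less than κ is contained in a projective submodule of F generated by fewer than κ elements. -/
/-!
Kaplansky's argument: well-order a basis `X` of a free module. For `N ≤ X →₀ R`, the
`x`-th coefficients of the elements of `N` supported on `Iic x` form a left ideal `I x`,
which is projective because `R` is hereditary, so the coefficient map onto it splits.
The splittings are triangular with respect to the order, so they assemble to an
isomorphism `⨁ x, I x ≃ N`. Hence submodules of projective modules are projective, and,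
`κ` being regular, a submodule of a free module of rank `< κ` needs fewer than `κ`
generators, so `κ`-generated modules are `κ`-presentable. If `F` is `κ`-flat, the span of
a small subset embeds, through the factorization of its inclusion, into a projective
module. Conversely, the image of a map out of a `κ`-presentable module is `κ`-generated,
so it lies in a projective submodule through which the map factors.
-/

open CategoryTheory CategoryTheory.Limits

universe u

variable {R : Type u} [Ring R]

/-- A left `R`-module `F` is `κ`-flat if every morphism from a `κ`-presentable module
into `F` factors through a projective module. -/
def IsKappaFlat (κ : Cardinal.{u}) (F : ModuleCat.{u} R) : Prop :=
  ∀ (E : ModuleCat.{u} R), IsKappaPresentable κ E → ∀ φ : E ⟶ F,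
    ∃ (P : ModuleCat.{u} R) (_ : Projective P) (α : E ⟶ P) (β : P ⟶ F), α ≫ β = φ

namespace Finsupp

variable {X : Type*} [LinearOrder X]

noncomputable def leadingIdeal (N : Submodule R (X →₀ R)) (x : X) : Ideal R :=
  (N ⊓ supported R R (Set.Iic x)).map (lapply x)

theorem apply_mem_leadingIdeal {N : Submodule R (X →₀ R)} {f : X →₀ R} (hf : f ∈ N)
    {x : X} (hfx : f ∈ supported R R (Set.Iic x)) : f x ∈ leadingIdeal N x :=
  ⟨f, ⟨hf, hfx⟩, rfl⟩

def IsLeadingSection (N : Submodule R (X →₀ R)) (x : X) (τ : leadingIdeal N x →ₗ[R] N) :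
    Prop :=
  ∀ i, (τ i : X →₀ R) x = i ∧ (τ i : X →₀ R) ∈ supported R R (Set.Iic x)

theorem exists_isLeadingSection (hhered : ∀ I : Ideal R, Module.Projective R I)
    (N : Submodule R (X →₀ R)) (x : X) : ∃ τ, IsLeadingSection N x τ := by
  obtain ⟨σ, hσ⟩ := Module.projective_lifting_property
    ((lapply x).submoduleMap (N ⊓ supported R R (Set.Iic x))) LinearMap.id
    (LinearMap.submoduleMap_surjective _ _)
  exact ⟨Submodule.inclusion inf_le_left ∘ₗ σ,
    fun i => ⟨congr_arg Subtype.val (LinearMap.congr_fun hσ i), (σ i).2.2⟩⟩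

variable {N : Submodule R (X →₀ R)} {τ : ∀ x, leadingIdeal N x →ₗ[R] N}

theorem apply_eq_zero_of_isLeadingSection {x : X} (hτ : IsLeadingSection N x (τ x))
    (i : leadingIdeal N x) {y : X} (hxy : x < y) : (τ x i : X →₀ R) y = 0 :=
  notMem_support_iff.1 fun hy => hxy.not_ge ((mem_supported R _).1 (hτ i).2 hy)

theorem lsum_injective_of_isLeadingSection (hτ : ∀ x, IsLeadingSection N x (τ x)) :
    Function.Injective (DFinsupp.lsum ℕ τ) := by
  classical
  refine (injective_iff_map_eq_zero _).2 fun m hm => ?_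
  by_contra hm0
  have hne : m.support.Nonempty := by
    rwa [Finset.nonempty_iff_ne_empty, Ne, DFinsupp.support_eq_empty]
  set x := m.support.max' hne
  have hx : x ∈ m.support := m.support.max'_mem hne
  have hcoeff : (DFinsupp.lsum ℕ τ m : X →₀ R) x = m x := by
    rw [DFinsupp.lsum_apply_apply, DFinsupp.sumAddHom_apply, DFinsupp.sum, Submodule.coe_sum,
      finsetSum_apply, Finset.sum_eq_single_of_mem x hx]
    · exact (hτ x (m x)).1
    · intro y hy hyx
      exact apply_eq_zero_of_isLeadingSection (hτ y) _ ((m.support.le_max' y hy).lt_of_ne hyx)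
  rw [hm] at hcoeff
  exact DFinsupp.mem_support_iff.1 hx (Subtype.ext hcoeff.symm)

theorem lsum_surjective_of_isLeadingSection [WellFoundedLT X]
    (hτ : ∀ x, IsLeadingSection N x (τ x)) : Function.Surjective (DFinsupp.lsum ℕ τ) := by
  classical
  set Φ := DFinsupp.lsum ℕ τ
  have hΦ : ∀ x i, Φ (DFinsupp.single x i) = τ x i := fun x i => by simp [Φ]
  -- Subtracting `τ x` of the top coefficient moves the support strictly below `x`.
  have key : ∀ x, ∀ f : N, (f : X →₀ R) ∈ supported R R (Set.Iic x) →
      f ∈ LinearMap.range Φ := by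
    intro x
    induction x using WellFoundedLT.induction with
    | ind x IH =>
      intro f hf
      set c : leadingIdeal N x := ⟨(f : X →₀ R) x, apply_mem_leadingIdeal f.2 hf⟩
      set g := f - τ x c
      have hg : ∀ y ∈ (g : X →₀ R).support, y < x := by
        intro y hy
        refine ((mem_supported R _).1 (Submodule.sub_mem _ hf (hτ x c).2) hy).lt_of_ne ?_
        rintro rfl
        exact mem_support_iff.1 hy (by simp [g, (hτ y c).1, c])
      have hgΦ : g ∈ LinearMap.range Φ := by
        rcases (g : X →₀ R).support.eq_empty_or_nonempty with h0 | hne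
        · rw [support_eq_empty, ZeroMemClass.coe_eq_zero] at h0
          exact h0 ▸ Submodule.zero_mem _
        · exact IH _ (hg _ (Finset.max'_mem _ hne)) g
            ((mem_supported R _).2 fun y hy => Finset.le_max' _ y hy)
      rw [← sub_add_cancel f (τ x c)]
      exact Submodule.add_mem _ hgΦ (hΦ x c ▸ LinearMap.mem_range_self _ _)
  intro f
  rcases (f : X →₀ R).support.eq_empty_or_nonempty with h0 | hne
  · rw [support_eq_empty, ZeroMemClass.coe_eq_zero] at h0
    exact ⟨0, by rw [h0, map_zero]⟩
  · exact key ((f : X →₀ R).support.max' hne) f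
      ((mem_supported R _).2 fun y hy => Finset.le_max' _ y hy)

theorem nonempty_linearEquiv_dfinsupp_leadingIdeal [WellFoundedLT X]
    (hhered : ∀ I : Ideal R, Module.Projective R I) (N : Submodule R (X →₀ R)) :
    Nonempty (N ≃ₗ[R] Π₀ x, leadingIdeal N x) := by
  choose τ hτ using exists_isLeadingSection hhered N
  exact ⟨(LinearEquiv.ofBijective _ ⟨lsum_injective_of_isLeadingSection hτ,
    lsum_surjective_of_isLeadingSection hτ⟩).symm⟩

end Finsupp

theorem Finsupp.projective_submodule (hhered : ∀ I : Ideal R, Module.Projective R I)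
    {X : Type*} (N : Submodule R (X →₀ R)) : Module.Projective R N := by
  obtain ⟨_, _⟩ := exists_wellFoundedLT X
  obtain ⟨e⟩ := Finsupp.nonempty_linearEquiv_dfinsupp_leadingIdeal hhered N
  have := fun x => hhered (Finsupp.leadingIdeal N x)
  exact Module.Projective.of_equiv e.symm

theorem Module.Projective.of_injective_of_hereditary
    (hhered : ∀ I : Ideal R, Module.Projective R I)
    {M P : Type*} [AddCommGroup M] [Module R M] [AddCommGroup P] [Module R P]
    [Module.Projective R P] (f : M →ₗ[R] P) (hf : Function.Injective f) :
    Module.Projective R M := by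
  obtain ⟨s, hs⟩ := Module.projective_def'.1 (inferInstance : Module.Projective R P)
  have hs_inj : Function.Injective s :=
    Function.LeftInverse.injective (g := Finsupp.linearCombination R id) (LinearMap.congr_fun hs)
  have hsf : Function.Injective (s ∘ₗ f) := hs_inj.comp hf
  have := Finsupp.projective_submodule hhered (LinearMap.range (s ∘ₗ f))
  exact Module.Projective.of_equiv (LinearEquiv.ofInjective _ hsf).symm

open Cardinal in
theorem Submodule.spanRank_top_dfinsupp_lt {κ : Cardinal.{u}} (hκ : κ.IsRegular)
    {X : Type u} (hX : #X < κ) {M : X → Type u} [∀ x, AddCommMonoid (M x)]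
    [∀ x, Module R (M x)] (hM : ∀ x, (⊤ : Submodule R (M x)).spanRank < κ) :
    (⊤ : Submodule R (Π₀ x, M x)).spanRank < κ := by
  classical
  set G := ⋃ x, DFinsupp.lsingle (R := R) x '' (⊤ : Submodule R (M x)).generators
  have hG : span R G = ⊤ := by
    simp only [G, span_iUnion, span_image, span_generators, map_top,
      DFinsupp.iSup_range_lsingle]
  refine hG ▸ (spanRank_span_le_card G).trans_lt (mk_iUnion_le_sum_mk.trans_lt ?_)
  refine sum_lt_of_isRegular hκ hX fun x => mk_image_le.trans_lt ?_
  exact (generators_card _).trans_lt (hM x)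

theorem Finsupp.spanRank_submodule_lt {κ : Cardinal.{u}} (hκ : κ.IsRegular)
    (hgen : ∀ I : Ideal R, I.spanRank < κ) (hhered : ∀ I : Ideal R, Module.Projective R I)
    {X : Type u} (hX : Cardinal.mk X < κ) (N : Submodule R (X →₀ R)) : N.spanRank < κ := by
  obtain ⟨_, _⟩ := exists_wellFoundedLT X
  obtain ⟨e⟩ := Finsupp.nonempty_linearEquiv_dfinsupp_leadingIdeal hhered N
  rw [← Submodule.spanRank_top, Submodule.spanRank_eq_of_equiv e]
  exact Submodule.spanRank_top_dfinsupp_lt hκ hX fun x => by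
    rw [Submodule.spanRank_top]; exact hgen _

theorem isKappaPresentable_of_spanRank_lt {κ : Cardinal.{u}} (hκ : κ.IsRegular)
    (hgen : ∀ I : Ideal R, I.spanRank < κ) (hhered : ∀ I : Ideal R, Module.Projective R I)
    {E : ModuleCat.{u} R} (hE : (⊤ : Submodule R E).spanRank < κ) : IsKappaPresentable κ E := by
  obtain ⟨s, hs, hspan⟩ := (⊤ : Submodule R E).exists_span_set_card_eq_spanRank
  set π := Finsupp.linearCombination R (Subtype.val : s → E)
  have hπ : Function.Surjective π := by
    rw [← LinearMap.range_eq_top, Finsupp.range_linearCombination, Subtype.range_coe, hspan]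
  have hsκ : Cardinal.mk s < κ := hs ▸ hE
  obtain ⟨t, ht, htspan⟩ := (LinearMap.ker π).exists_span_set_card_eq_spanRank
  have htκ : Cardinal.mk t < κ := ht ▸ Finsupp.spanRank_submodule_lt hκ hgen hhered hsκ _
  set g := Finsupp.linearCombination R (Subtype.val : t → s →₀ R)
  have hg : LinearMap.range g = LinearMap.ker π := by
    rw [Finsupp.range_linearCombination, Subtype.range_coe, htspan]
  exact ⟨t, s, htκ, hsκ, g,
    ⟨(Submodule.quotEquivOfEq _ _ hg).trans (π.quotKerEquivOfSurjective hπ)⟩⟩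

theorem spanRank_top_lt_of_isKappaPresentable {κ : Cardinal.{u}} {E : ModuleCat.{u} R}
    (hE : IsKappaPresentable κ E) : (⊤ : Submodule R E).spanRank < κ := by
  obtain ⟨_, Y, -, hY, g, ⟨e⟩⟩ := hE
  rw [← Submodule.spanRank_eq_of_equiv e, ← (LinearMap.range g).range_mkQ]
  refine (Submodule.spanRank_range_le _).trans_lt ?_
  rw [← (Finsupp.basisSingleOne (R := R) (ι := Y)).span_eq]
  exact (Submodule.spanRank_span_le_card _).trans_lt (Cardinal.mk_range_le.trans_lt hY)

/-- Over a left hereditary ring `R` all of whose left ideals are generated by fewer than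
`κ` elements (`κ` a regular cardinal), a left `R`-module `F` is `κ`-flat if and only if
every subset of `F` of cardinality `< κ` is contained in a projective submodule of `F`
generated by fewer than `κ` elements. -/
theorem isKappaFlat_iff_kappaProjective_of_hereditary
    (κ : Cardinal.{u}) (hκ : κ.IsRegular)
    (hgen : ∀ I : Ideal R, ∃ s : Set R, Cardinal.mk s < κ ∧ Ideal.span s = I)
    (hhered : ∀ I : Ideal R, Module.Projective R I)
    (F : ModuleCat.{u} R) :
    IsKappaFlat κ F ↔
      ∀ s : Set F, Cardinal.mk s < κ →
        ∃ N : Submodule R F, s ⊆ (N : Set F) ∧ Module.Projective R N ∧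
          ∃ t : Set F, Cardinal.mk t < κ ∧ t ⊆ (N : Set F) ∧ Submodule.span R t = N := by
  have hgen_spanRank (I : Ideal R) : I.spanRank < κ := by
    obtain ⟨s, hs, rfl⟩ := hgen I
    exact (Submodule.spanRank_span_le_card s).trans_lt hs
  constructor
  · intro hflat s hs
    set M := Submodule.span R s
    have hM : IsKappaPresentable κ (ModuleCat.of R M) :=
      isKappaPresentable_of_spanRank_lt hκ hgen_spanRank hhered <| by
        rw [Submodule.spanRank_top]; exact (Submodule.spanRank_span_le_card s).trans_lt hs
    obtain ⟨P, hP, α, β, hαβ⟩ := hflat _ hM (ModuleCat.ofHom M.subtype)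
    have := (IsProjective.iff_projective P).2 hP
    have hβα (m : M) : β.hom (α.hom m) = m := congr_arg (fun f => f.hom m) hαβ
    have hα : Function.Injective α.hom := fun a b hab =>
      Subtype.ext (by rw [← hβα a, ← hβα b, hab])
    exact ⟨M, Submodule.subset_span, .of_injective_of_hereditary hhered α.hom hα,
      s, hs, Submodule.subset_span, rfl⟩
  · intro h E hE φ
    obtain ⟨t, ht, hspan⟩ := (LinearMap.range φ.hom).exists_span_set_card_eq_spanRank
    obtain ⟨N, htN, hN, -⟩ := h t <| ht ▸
      (Submodule.spanRank_range_le _).trans_lt (spanRank_top_lt_of_isKappaPresentable hE)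
    have hφN (z : E) : φ z ∈ N := Submodule.span_le.2 htN (hspan ▸ LinearMap.mem_range_self _ z)
    exact ⟨.of R N, (IsProjective.iff_projective N).1 hN,
      ModuleCat.ofHom (LinearMap.codRestrict N φ.hom hφN), ModuleCat.ofHom N.subtype, rfl⟩
end

section
/- Let E₁ ← E₂ ← E₃ ← ··· be a projective system of abelian groups (indexed by ℕ). Then lim Eₙ = 0 and the system satisfies the Mittag-Leffler condition if and only if the system is pro-zero, i.e., for every n there exists m ≥ n such that the transition map E_m → E_n is zero. -/
/-- For a projective system `E₁ ← E₂ ← E₃ ← ⋯` of abelian groups indexed by `ℕ`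
(with composite transition maps `g h : E m →+ E n` for `h : n ≤ m`), the inverse limit
vanishes and the system satisfies the Mittag-Leffler condition if and only if the system
is pro-zero, i.e. for every `n` there is `m ≥ n` with zero transition map `E m → E n`. -/
theorem limEqZero_and_mittagLeffler_iff_proZero
    (E : ℕ → Type*) [∀ n, AddCommGroup (E n)]
    (g : ∀ {m n : ℕ}, n ≤ m → (E m →+ E n))
    (hid : ∀ n, g (le_refl n) = AddMonoidHom.id (E n))
    (hcomp : ∀ {k m n : ℕ} (h₁ : n ≤ m) (h₂ : m ≤ k),
      (g h₁).comp (g h₂) = g (h₁.trans h₂)) :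
    ((∀ x : ∀ n, E n, (∀ (m n : ℕ) (h : n ≤ m), g h (x m) = x n) → ∀ n, x n = 0) ∧
      (∀ n, ∃ m, ∃ h : n ≤ m, ∀ (k) (h' : m ≤ k),
        AddMonoidHom.range (g (h.trans h')) = AddMonoidHom.range (g h))) ↔
    (∀ n, ∃ m, ∃ h : n ≤ m, g h = 0) := by
  constructor
  · rintro ⟨hlim, hML⟩ n₀
    choose μ hμ hst using hML
    -- surjectivity between stable images
    have key : ∀ {n m : ℕ} (h : n ≤ m) (y : E n), y ∈ (g (hμ n)).range →
        ∃ z : E m, z ∈ (g (hμ m)).range ∧ g h z = y := by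
      intro n m h y hy
      have h1 : μ n ≤ max (μ n) (μ m) := le_max_left _ _
      have h2 : μ m ≤ max (μ n) (μ m) := le_max_right _ _
      rw [← hst n _ h1] at hy
      obtain ⟨w, hw⟩ := hy
      refine ⟨g ((hμ m).trans h2) w, ⟨g h2 w, by rw [← AddMonoidHom.comp_apply, hcomp]⟩, ?_⟩
      rw [← hw]
      calc g h (g ((hμ m).trans h2) w)
          = ((g h).comp (g ((hμ m).trans h2))) w := rfl
        _ = g (h.trans ((hμ m).trans h2)) w := by rw [hcomp]
        _ = g ((hμ n).trans h1) w := rfl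
    refine ⟨μ n₀, hμ n₀, ?_⟩
    have main : ∀ y, y ∈ (g (hμ n₀)).range → y = 0 := by
      intro y hy
      -- build a compatible thread through the stable images
      let v : ∀ k, {z : E (n₀ + k) // z ∈ (g (hμ (n₀ + k))).range} :=
        fun k => Nat.rec ⟨y, hy⟩
          (fun k ih => ⟨(key (Nat.le_succ (n₀ + k)) ih.1 ih.2).choose,
            (key (Nat.le_succ (n₀ + k)) ih.1 ih.2).choose_spec.1⟩) k
      have hustep : ∀ k, g (Nat.le_succ (n₀ + k)) (v (k + 1)).1 = (v k).1 :=
        fun k => (key (Nat.le_succ (n₀ + k)) (v k).1 (v k).2).choose_spec.2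
      have hchain : ∀ m k (h : k ≤ m),
          g (Nat.add_le_add_left h n₀) (v m).1 = (v k).1 := by
        intro m
        induction m with
        | zero => intro k hk
                  interval_cases k
                  have := hid (n₀ + 0)
                  calc g (Nat.add_le_add_left (le_refl 0) n₀) (v 0).1
                      = AddMonoidHom.id (E (n₀ + 0)) (v 0).1 := by rw [← this]
                    _ = (v 0).1 := rfl
        | succ m ih =>
          intro k hk
          rcases Nat.eq_or_lt_of_le hk with rfl | hk'
          · calc g (Nat.add_le_add_left (le_refl (m+1)) n₀) (v (m+1)).1
                = AddMonoidHom.id (E (n₀ + (m+1))) (v (m+1)).1 := by rw [← hid]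
              _ = (v (m+1)).1 := rfl
          · have hk2 : k ≤ m := Nat.lt_succ_iff.mp hk'
            calc g (Nat.add_le_add_left hk n₀) (v (m+1)).1
                = ((g (Nat.add_le_add_left hk2 n₀)).comp
                    (g (Nat.le_succ (n₀ + m)))) (v (m+1)).1 := by rw [hcomp]
              _ = g (Nat.add_le_add_left hk2 n₀) (g (Nat.le_succ (n₀ + m)) (v (m+1)).1) := rfl
              _ = g (Nat.add_le_add_left hk2 n₀) (v m).1 := by rw [hustep]
              _ = (v k).1 := ih k hk2
      let x : ∀ j, E j := fun j => g (Nat.le_add_left j n₀) (v j).1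
      have hx : ∀ (m n : ℕ) (h : n ≤ m), g h (x m) = x n := by
        intro m n h
        calc g h (x m) = ((g h).comp (g (Nat.le_add_left m n₀))) (v m).1 := rfl
          _ = g (h.trans (Nat.le_add_left m n₀)) (v m).1 := by rw [hcomp]
          _ = ((g (Nat.le_add_left n n₀)).comp (g (Nat.add_le_add_left h n₀))) (v m).1 := by
                rw [hcomp]
          _ = g (Nat.le_add_left n n₀) (g (Nat.add_le_add_left h n₀) (v m).1) := rfl
          _ = g (Nat.le_add_left n n₀) (v n).1 := by rw [hchain m n h]
          _ = x n := rfl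
      have hzero := hlim x hx n₀
      have hy0 : x n₀ = y := by
        have := hchain n₀ 0 (Nat.zero_le n₀)
        calc x n₀ = g (Nat.add_le_add_left (Nat.zero_le n₀) n₀) (v n₀).1 := rfl
          _ = (v 0).1 := this
          _ = y := rfl
      rw [hy0] at hzero
      exact hzero
    ext z
    exact main (g (hμ n₀) z) ⟨z, rfl⟩
  · intro hpz
    constructor
    · intro x hx n
      obtain ⟨m, h, hz⟩ := hpz n
      rw [← hx m n h, hz]
      rfl
    · intro n
      obtain ⟨m, h, hz⟩ := hpz n
      refine ⟨m, h, fun k h' => ?_⟩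
      have : g (h.trans h') = 0 := by
        rw [← hcomp h h', hz, AddMonoidHom.zero_comp]
      rw [this, hz]

      simp
end

section
/- Let R be an associative ring and M a finitely generated left R-module, and let S = Hom_R(M,M)^op. Then the monad T_M : X ↦ Hom_R(M, M^{(X)}) on the category of sets is naturally isomorphic to the monad T_S : X ↦ S[X] sending a set X to the free left S-module on X; in particular, Hom_R(M, M^{(X)}) ≅ Hom_R(M,M)^{(X)} for every set X. -/
universe u v

/-!
A linear map `f : M → M^{(X)}` out of a finitely generated module only meets finitely many
coordinates: the images of a finite generating set are supported on a finite set `T ⊆ X`, hence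
so is all of `f`, and `f` is the finite sum of its coordinates `x ∈ T`. Injectivity holds for
any `M`, since the coordinates of the image of `(g_x)_x` recover each `g_x`.
-/

namespace Finsupp

variable {R N M X : Type*} [Semiring R] [AddCommMonoid N] [Module R N] [AddCommMonoid M]
  [Module R M]

noncomputable def toLinearMapFinsupp (f : X →₀ (N →ₗ[R] M)) : N →ₗ[R] (X →₀ M) :=
  f.sum fun x g => (lsingle x : M →ₗ[R] (X →₀ M)).comp g

@[simp]
theorem toLinearMapFinsupp_apply_apply (f : X →₀ (N →ₗ[R] M)) (n : N) (x : X) :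
    toLinearMapFinsupp f n x = f x n := by
  classical
  simp only [toLinearMapFinsupp, Finsupp.sum, LinearMap.coe_sum, Finset.sum_apply,
    Finsupp.finsetSum_apply, LinearMap.comp_apply, lsingle_apply, single_apply,
    Finset.sum_ite_eq', mem_support_iff, ne_eq, ite_not]
  split_ifs with h <;> simp [h]

theorem toLinearMapFinsupp_injective :
    Function.Injective (toLinearMapFinsupp : (X →₀ (N →ₗ[R] M)) → N →ₗ[R] (X →₀ M)) :=
  fun f g h => by
    ext x n
    simpa using DFunLike.congr_fun (DFunLike.congr_fun h n) x

theorem exists_finset_forall_support_subset_of_finite [Module.Finite R N]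
    (f : N →ₗ[R] (X →₀ M)) : ∃ T : Finset X, ∀ n, (f n).support ⊆ T := by
  classical
  obtain ⟨s, hs⟩ := Module.Finite.fg_top (R := R) (M := N)
  let T : Finset X := s.sup fun n => (f n).support
  refine ⟨T, fun n => ?_⟩
  have hle : Submodule.span R (s : Set N) ≤ (supported M R (T : Set X)).comap f :=
    Submodule.span_le.2 fun n hn => (mem_supported R _).2 <|
      Finset.coe_subset.2 <| Finset.le_sup (f := fun n => (f n).support) hn
  exact Finset.coe_subset.1 <| (mem_supported R _).1 <| hle (hs ▸ Submodule.mem_top)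

theorem toLinearMapFinsupp_surjective [Module.Finite R N] :
    Function.Surjective (toLinearMapFinsupp : (X →₀ (N →ₗ[R] M)) → N →ₗ[R] (X →₀ M)) := by
  intro f
  obtain ⟨T, hT⟩ := exists_finset_forall_support_subset_of_finite f
  refine ⟨onFinset T (fun x => (lapply x).comp f) fun x hx => ?_, ?_⟩
  · obtain ⟨n, hn⟩ : ∃ n, f n x ≠ 0 := by
      by_contra! h
      exact hx (LinearMap.ext h)
    exact hT n (mem_support_iff.2 hn)
  · ext n x
    simp

end Finsupp

/-- For a finitely generated left module `M` over an associative ring `R`, the canonical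
map `⊕_{x ∈ X} Hom_R(M,M) → Hom_R(M, M^{(X)})` is bijective for every set `X`; thus the
monad `X ↦ Hom_R(M, M^{(X)})` on the category of sets is naturally isomorphic to the monad
`X ↦ S[X]` of free modules over `S = Hom_R(M,M)^op`, i.e.
`Hom_R(M, M^{(X)}) ≅ Hom_R(M,M)^{(X)}`. -/
theorem homIntoFinsuppCopower_bijective_of_finite
    {R : Type u} [Ring R] {M : Type u} [AddCommGroup M] [Module R M]
    (hM : Module.Finite R M) (X : Type v) :
    Function.Bijective (fun f : X →₀ (M →ₗ[R] M) =>
      f.sum fun x g => (Finsupp.lsingle x : M →ₗ[R] (X →₀ M)).comp g) :=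
  ⟨Finsupp.toLinearMapFinsupp_injective, Finsupp.toLinearMapFinsupp_surjective⟩
end
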